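/- Characteristic polynomial of the GGT matrix and the product formula at 1 (Proposition 2.5(c)): Let n ≥ 1 and α_0,…,α_{n−1} ∈ ℂ with |α_k| < 1 for 0 ≤ k ≤ n−2 and |α_{n−1}| = 1, let (Φ_j) be the monic polynomials generated by the Szegő recursion, and let G = G(α_0,…,α_{n−1}) be the GGT matrix. Then det(z·Id_n − G) = Φ_n(z) for every z ∈ ℂ; in particular det(Id_n − G) = ∏_{k=0}^{n−1} (1−γ_k), where γ_0,…,γ_{n−1} are the deformed Verblunsky coefficients associated with α_0,…,α_{n−1}. -/

import Mathlib

open MeasureTheory Complex Finset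
open scoped Real ComplexConjugate

noncomputable section

/-- `ρ = sqrt(1 - |a|²)`. -/
def rho (a : ℂ) : ℝ := Real.sqrt (1 - ‖a‖ ^ 2)

/-- The GGT (Hessenberg) matrix associated with Verblunsky coefficients
`α 0, …, α (n-1)`, with the convention `α (-1) = -1`. -/
def GGT (n : ℕ) (α : ℕ → ℂ) : Matrix (Fin n) (Fin n) ℂ :=
  Matrix.of fun i j =>
    if (i : ℕ) ≤ (j : ℕ) then
      -(if (i : ℕ) = 0 then (-1 : ℂ) else α ((i : ℕ) - 1)) * (starRingEnd ℂ) (α (j : ℕ)) *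
        ∏ p ∈ Finset.Ico (i : ℕ) (j : ℕ), (rho (α p) : ℂ)
    else if (i : ℕ) = (j : ℕ) + 1 then (rho (α (j : ℕ)) : ℂ)
    else 0

/-- The monic orthogonal (Szegő) polynomials generated by the Szegő recursion
`Φ₀ = 1`, `Φ_{j+1}(z) = z Φ_j(z) - conj(α_j) Φ_j^*(z)`, where
`Φ_j^*` is the reversed polynomial (conjugated coefficients in reverse order). -/
def szego (α : ℕ → ℂ) : ℕ → Polynomial ℂ
  | 0 => 1
  | j + 1 =>
      Polynomial.X * szego α j -
        Polynomial.C ((starRingEnd ℂ) (α j)) *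
          Polynomial.reflect j ((szego α j).map (starRingEnd ℂ))

/-! The last column of `G_{n+1}` is `-conj α_n w_n`, with `w_n` independent of `α_n`.
Expanding `det (z - G_{n+1})` along that column gives `z det (z - G_n) + conj α_n det B_n`,
where `B_n` is `z - G_{n+1}` with last column `w_n`. As `w_{n+1} = ρ_n w_n + α_n e_{n+1}`,
expanding `B_{n+1}` along its last row gives `det B_{n+1} = α_n det (z - G_{n+1}) + ρ_n² det B_n`.
With `ρ_n² = 1 - |α_n|²` these are the Szegő recursions for `Φ_n(z)` and `-Φ_n^*(z)`.
At `z = 1` we have `Φ_n^*(1) = conj Φ_n(1)`, so the recursion reads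
`Φ_{n+1}(1) = Φ_n(1) - conj α_n conj Φ_n(1) = Φ_n(1) (1 - γ_n)`. -/

namespace Polynomial

variable {R : Type*}

theorem reflect_add_one [Semiring R] {p : R[X]} {N : ℕ} (hp : p.natDegree ≤ N) :
    reflect (N + 1) p = X * reflect N p := by
  simpa [add_comm 1 N] using reflect_mul (1 : R[X]) p (F := 1) (by simp) hp

theorem eval_one_reflect [CommSemiring R] {p : R[X]} {N : ℕ} (hp : p.natDegree ≤ N) :
    (reflect N p).eval 1 = p.eval 1 := by
  let _ : Invertible (1 : R) := invertibleOne
  simpa using eval₂_reflect_mul_pow (RingHom.id R) 1 N p hp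

end Polynomial

namespace Matrix

variable {R : Type*} [CommRing R] {n : ℕ}

theorem det_succ_row_of_forall_ne_eq_zero (A : Matrix (Fin (n + 1)) (Fin (n + 1)) R)
    (i j : Fin (n + 1)) (h : ∀ k, k ≠ j → A i k = 0) :
    A.det = (-1) ^ (i + j : ℕ) * A i j * (A.submatrix i.succAbove j.succAbove).det := by
  rw [det_succ_row A i, sum_eq_single j (fun k _ hk => by rw [h k hk, mul_zero, zero_mul])
    (fun hj => absurd (mem_univ j) hj)]

theorem det_updateCol_last_single (A : Matrix (Fin (n + 1)) (Fin (n + 1)) R) :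
    (A.updateCol (Fin.last n) (Pi.single (Fin.last n) 1)).det =
      (A.submatrix Fin.castSucc Fin.castSucc).det := by
  rw [det_succ_column _ (Fin.last n), sum_eq_single (Fin.last n)
    (fun i _ hi => by simp [hi]) (fun h => absurd (mem_univ _) h)]
  simp only [updateCol_self, Pi.single_eq_same, ← two_mul, pow_mul, neg_one_sq, one_pow,
    one_mul, Fin.succAbove_last]
  congr 1
  ext i j
  simp [(Fin.castSucc_lt_last j).ne]

end Matrix

open Polynomial

def szegoStar (α : ℕ → ℂ) (n : ℕ) : ℂ[X] :=
  reflect n ((szego α n).map (starRingEnd ℂ))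

theorem szego_succ (α : ℕ → ℂ) (n : ℕ) :
    szego α (n + 1) = X * szego α n - C (conj (α n)) * szegoStar α n :=
  rfl

theorem eval_szego_succ (α : ℕ → ℂ) (z : ℂ) (n : ℕ) :
    (szego α (n + 1)).eval z = z * (szego α n).eval z - conj (α n) * (szegoStar α n).eval z := by
  simp [szego_succ]

theorem natDegree_szego_le (α : ℕ → ℂ) (n : ℕ) : (szego α n).natDegree ≤ n := by
  induction n with
  | zero => simp [szego]
  | succ n ih =>
    rw [szego_succ]
    refine (natDegree_sub_le _ _).trans (max_le ?_ ?_)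
    · exact (natDegree_mul_le_of_le natDegree_X_le ih).trans_eq (add_comm _ _)
    · exact (natDegree_C_mul_le _ _).trans <| natDegree_reflect_le.trans <|
        max_le n.le_succ (natDegree_map_le.trans (ih.trans n.le_succ))

theorem map_conj_szegoStar (α : ℕ → ℂ) (n : ℕ) :
    (szegoStar α n).map (starRingEnd ℂ) = reflect n (szego α n) := by
  simp [szegoStar, ← reflect_map, Polynomial.map_map]

theorem szegoStar_succ (α : ℕ → ℂ) (n : ℕ) :
    szegoStar α (n + 1) = szegoStar α n - C (α n) * X * szego α n := by
  have hdeg : ((szego α n).map (starRingEnd ℂ)).natDegree ≤ n :=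
    natDegree_map_le.trans (natDegree_szego_le α n)
  rw [szegoStar, szego_succ, Polynomial.map_sub, Polynomial.map_mul, Polynomial.map_mul, map_X,
    map_C, map_conj_szegoStar, Complex.conj_conj, reflect_sub, reflect_C_mul,
    reflect_add_one (natDegree_reflect_le.trans (max_le le_rfl (natDegree_szego_le α n))),
    reflect_reflect, add_comm n 1, reflect_mul _ _ natDegree_X_le hdeg, reflect_one_X, one_mul,
    szegoStar, mul_assoc]

theorem eval_one_szegoStar (α : ℕ → ℂ) (n : ℕ) :
    (szegoStar α n).eval 1 = conj ((szego α n).eval 1) := by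
  rw [szegoStar, eval_one_reflect (natDegree_map_le.trans (natDegree_szego_le α n)),
    eval_one_map]

theorem eval_one_szego_eq_prod {α γ : ℕ → ℂ} {n : ℕ}
    (hγ : ∀ k < n, γ k = conj (α k) * ∏ j ∈ range k, (1 - conj (γ j)) / (1 - γ j)) :
    (szego α n).eval 1 = ∏ k ∈ range n, (1 - γ k) := by
  induction n with
  | zero => simp [szego]
  | succ n ih =>
    have hconj : conj (∏ k ∈ range n, (1 - γ k)) =
        (∏ k ∈ range n, (1 - γ k)) * ∏ k ∈ range n, (1 - conj (γ k)) / (1 - γ k) := by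
      rw [map_prod, ← prod_mul_distrib]
      refine prod_congr rfl fun k _ => ?_
      rw [map_sub, map_one, mul_div_cancel_of_imp' fun h => by
        rw [show γ k = 1 by linear_combination -h, map_one, sub_self]]
    rw [szego_succ, eval_sub, eval_mul, eval_mul, eval_X, eval_C, one_mul, eval_one_szegoStar,
      ih fun k hk => hγ k (hk.trans n.lt_succ_self), hconj, prod_range_succ, hγ n n.lt_succ_self]
    ring

theorem ofReal_rho_sq {a : ℂ} (ha : ‖a‖ ≤ 1) : (rho a : ℂ) ^ 2 = 1 - a * conj a := by
  rw [← ofReal_pow, rho, Real.sq_sqrt (by nlinarith [norm_nonneg a]), mul_conj,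
    normSq_eq_norm_sq]
  push_cast
  ring

def alphaPrev (α : ℕ → ℂ) (i : ℕ) : ℂ := if i = 0 then -1 else α (i - 1)

/-- Column `j` of `GGT` is `-conj α_j • ggtCol α j + ρ_j • e_{j+1}`. -/
def ggtCol (α : ℕ → ℂ) (j i : ℕ) : ℂ :=
  if i ≤ j then alphaPrev α i * ∏ p ∈ Ico i j, (rho (α p) : ℂ) else 0

def charMatrix (α : ℕ → ℂ) (z : ℂ) (n : ℕ) : Matrix (Fin n) (Fin n) ℂ := z • 1 - GGT n α

def starMatrix (α : ℕ → ℂ) (z : ℂ) (n : ℕ) : Matrix (Fin (n + 1)) (Fin (n + 1)) ℂ :=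
  (charMatrix α z (n + 1)).updateCol (Fin.last n) fun i => ggtCol α n i

theorem ggtCol_succ (α : ℕ → ℂ) (n i : ℕ) :
    ggtCol α (n + 1) i = rho (α n) * ggtCol α n i + if i = n + 1 then α n else 0 := by
  rcases lt_trichotomy i (n + 1) with h | rfl | h
  · have hi : i ≤ n := Nat.lt_succ_iff.mp h
    simp only [ggtCol, hi, h.le, h.ne, if_true, if_false, prod_Ico_succ_top hi, add_zero]
    ring
  · simp [ggtCol, alphaPrev]
  · simp [ggtCol, h.not_ge, (Nat.lt_of_succ_lt h).not_ge, h.ne']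

theorem charMatrix_apply (α : ℕ → ℂ) (z : ℂ) {n : ℕ} (i j : Fin n) :
    charMatrix α z n i j = (if (i : ℕ) = j then z else 0) + conj (α j) * ggtCol α j i -
      if (i : ℕ) = j + 1 then (rho (α j) : ℂ) else 0 := by
  simp only [charMatrix, GGT, ggtCol, alphaPrev, Matrix.sub_apply, Matrix.smul_apply,
    Matrix.one_apply, Matrix.of_apply, Fin.ext_iff, smul_eq_mul]
  split_ifs <;> first | ring1 | omega

theorem charMatrix_submatrix_castSucc (α : ℕ → ℂ) (z : ℂ) (n : ℕ) :
    (charMatrix α z (n + 1)).submatrix Fin.castSucc Fin.castSucc = charMatrix α z n := by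
  ext i j
  simp only [Matrix.submatrix_apply, charMatrix_apply, Fin.val_castSucc]

theorem charMatrix_col_last (α : ℕ → ℂ) (z : ℂ) (n : ℕ) :
    (fun i => charMatrix α z (n + 1) i (Fin.last n)) =
      z • Pi.single (Fin.last n) 1 + conj (α n) • fun i : Fin (n + 1) => ggtCol α n i := by
  ext i
  have := i.isLt
  simp [charMatrix_apply, Pi.single_apply, Fin.ext_iff, show (i : ℕ) ≠ n + 1 by omega]

theorem charMatrix_last_castSucc (α : ℕ → ℂ) (z : ℂ) (n : ℕ) (j : Fin (n + 1)) :
    charMatrix α z (n + 2) (Fin.last (n + 1)) j.castSucc =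
      if j = Fin.last n then -rho (α n) else 0 := by
  have hj : (j : ℕ) ≤ n := Nat.lt_succ_iff.mp j.isLt
  by_cases h : (j : ℕ) = n
  · simp [charMatrix_apply, ggtCol, Fin.ext_iff, h]
  · simp [charMatrix_apply, ggtCol, Fin.ext_iff, h, Ne.symm h, show n + 1 ≠ j by omega,
      show ¬n + 1 ≤ j by omega]

theorem det_charMatrix_succ (α : ℕ → ℂ) (z : ℂ) (n : ℕ) :
    (charMatrix α z (n + 1)).det =
      z * (charMatrix α z n).det + conj (α n) * (starMatrix α z n).det := by
  conv_lhs => rw [← Matrix.updateCol_eq_self (charMatrix α z (n + 1)) (Fin.last n),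
    charMatrix_col_last]
  rw [Matrix.det_updateCol_add, Matrix.det_updateCol_smul, Matrix.det_updateCol_smul,
    Matrix.det_updateCol_last_single, charMatrix_submatrix_castSucc, starMatrix]

theorem det_starMatrix_succ (α : ℕ → ℂ) (z : ℂ) (n : ℕ) :
    (starMatrix α z (n + 1)).det =
      α n * (charMatrix α z (n + 1)).det + rho (α n) ^ 2 * (starMatrix α z n).det := by
  set X := (charMatrix α z (n + 2)).updateCol (Fin.last (n + 1)) fun i => ggtCol α n i
  have hminor : X.submatrix (Fin.last (n + 1)).succAbove (Fin.last n).castSucc.succAbove =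
      starMatrix α z n := by
    ext i k
    induction k using Fin.lastCases with
    | last => simp [X, starMatrix]
    | cast k =>
      simp [X, starMatrix, Fin.succAbove_castSucc_of_lt _ _ (Fin.castSucc_lt_last k),
        ← charMatrix_submatrix_castSucc α z (n + 1)]
  have hX : X.det = rho (α n) * (starMatrix α z n).det := by
    rw [Matrix.det_succ_row_of_forall_ne_eq_zero X (Fin.last (n + 1)) (Fin.last n).castSucc
      fun k hk => ?_, hminor]
    · simp [X, charMatrix_last_castSucc]
    · induction k using Fin.lastCases with
      | last => simp [X, ggtCol]
      | cast k => simp [X, charMatrix_last_castSucc, Fin.castSucc_injective _ |>.ne_iff.mp hk]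
  have hcol : (fun i : Fin (n + 2) => ggtCol α (n + 1) i) =
      (rho (α n) : ℂ) • (fun i : Fin (n + 2) => ggtCol α n i) +
        α n • Pi.single (Fin.last (n + 1)) 1 := by
    ext i
    simp [ggtCol_succ, Pi.single_apply, Fin.ext_iff]
  rw [starMatrix, hcol, Matrix.det_updateCol_add, Matrix.det_updateCol_smul,
    Matrix.det_updateCol_smul, hX, Matrix.det_updateCol_last_single, charMatrix_submatrix_castSucc]
  ring

theorem det_charMatrix_and_det_starMatrix {α : ℕ → ℂ} (z : ℂ) {n : ℕ}
    (hα : ∀ k < n, ‖α k‖ ≤ 1) :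
    (charMatrix α z n).det = (szego α n).eval z ∧
      (starMatrix α z n).det = -(szegoStar α n).eval z := by
  induction n with
  | zero => simp [charMatrix, starMatrix, ggtCol, alphaPrev, szego, szegoStar]
  | succ n ih =>
    obtain ⟨hM, hB⟩ := ih fun k hk => hα k (hk.trans n.lt_succ_self)
    have hM' : (charMatrix α z (n + 1)).det = (szego α (n + 1)).eval z := by
      rw [det_charMatrix_succ, hM, hB, eval_szego_succ]
      ring
    refine ⟨hM', ?_⟩
    rw [det_starMatrix_succ, hM', hB, ofReal_rho_sq (hα n n.lt_succ_self), szegoStar_succ,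
      eval_szego_succ]
    simp only [eval_sub, eval_mul, eval_X, eval_C]
    ring

theorem det_charMatrix {α : ℕ → ℂ} (z : ℂ) {n : ℕ} (hα : ∀ k, k + 1 < n → ‖α k‖ ≤ 1) :
    (charMatrix α z n).det = (szego α n).eval z := by
  cases n with
  | zero => simp [charMatrix, szego]
  | succ n =>
    obtain ⟨hM, hB⟩ := det_charMatrix_and_det_starMatrix (n := n) z fun k hk => hα k (by omega)
    rw [det_charMatrix_succ, hM, hB, eval_szego_succ]
    ring

theorem ggt_charpoly_eq_szego_general (n : ℕ) (α : ℕ → ℂ)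
    (h1 : ∀ k, k + 1 < n → ‖α k‖ < 1)
    (γ : ℕ → ℂ)
    (hγ : ∀ k < n, γ k = (starRingEnd ℂ) (α k) *
      ∏ j ∈ Finset.range k, (1 - (starRingEnd ℂ) (γ j)) / (1 - γ j)) :
    (∀ z : ℂ,
      Matrix.det (z • (1 : Matrix (Fin n) (Fin n) ℂ) - GGT n α) = (szego α n).eval z) ∧
    Matrix.det ((1 : Matrix (Fin n) (Fin n) ℂ) - GGT n α) =
      ∏ k ∈ Finset.range n, (1 - γ k) := by
  have hchar (z : ℂ) : (z • (1 : Matrix (Fin n) (Fin n) ℂ) - GGT n α).det = (szego α n).eval z :=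
    det_charMatrix z fun k hk => (h1 k hk).le
  refine ⟨hchar, ?_⟩
  rw [← one_smul ℂ (1 : Matrix (Fin n) (Fin n) ℂ), hchar, eval_one_szego_eq_prod hγ]

/-- **Proposition 2.5(c)**: the characteristic polynomial of the GGT matrix
`G(α₀,…,α_{n-1})` is `Φ_n`, and in particular
`det(Id - G) = ∏_{k<n} (1 - γ_k)` where the `γ_k` are the deformed Verblunsky
coefficients. -/
theorem ggt_charpoly_eq_szego (n : ℕ) (hn : 1 ≤ n) (α : ℕ → ℂ)
    (h1 : ∀ k, k + 1 < n → ‖α k‖ < 1)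
    (h2 : ‖α (n - 1)‖ = 1)
    (γ : ℕ → ℂ)
    (hγ : ∀ k < n, γ k = (starRingEnd ℂ) (α k) *
      ∏ j ∈ Finset.range k, (1 - (starRingEnd ℂ) (γ j)) / (1 - γ j)) :
    (∀ z : ℂ,
      Matrix.det (z • (1 : Matrix (Fin n) (Fin n) ℂ) - GGT n α) = (szego α n).eval z) ∧
    Matrix.det ((1 : Matrix (Fin n) (Fin n) ℂ) - GGT n α) =
      ∏ k ∈ Finset.range n, (1 - γ k) :=
  ggt_charpoly_eq_szego_general n α h1 γ hγ
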